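/- Let p, m', k be integers with p ≥ 3, m' > 0, k ≥ 2, and p > 2k. Then (k^2+pm')^2 - 6k^2 - 6pm' + 5 + 2k(k+m')(p-k) + 4m' - 4p + 4k + 2(p-m'-k)(k^2+pm') > 0. -/

import Mathlib

/-!
Write `N = k^2 + p*m'`. The left-hand side regroups as
`N * (N - 2*m' - 6) + (2*(p - k)*N - 4*p) + (5 + 2*k*(k + m')*(p - k) + 4*m' + 4*k)`.
Since `p ≥ 2k + 1 ≥ 5`, we have `N ≥ 5*m' + 4 ≥ 2*m' + 6` and `N > p`, while `p - k > k ≥ 2`;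
so the first bracket is nonnegative and the other two are positive.
-/

lemma cassonWalker_lhs_eq (p m' k : ℤ) :
    (k^2 + p*m')^2 - 6*k^2 - 6*p*m' + 5 + 2*k*(k + m')*(p - k) + 4*m' - 4*p + 4*k
      + 2*(p - m' - k)*(k^2 + p*m') =
    (k^2 + p*m') * (k^2 + p*m' - (2*m' + 6)) + (2*(p - k)*(k^2 + p*m') - 4*p)
      + (5 + 2*k*(k + m')*(p - k) + 4*m' + 4*k) := by
  ring

theorem cassonWalker_neg_framing_k_ge_two_general (p m' k : ℤ)
    (hm' : 0 < m') (hk : 2 ≤ k) (hpk : 2*k < p) :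
    (k^2 + p*m')^2 - 6*k^2 - 6*p*m' + 5 + 2*k*(k + m')*(p - k) + 4*m' - 4*p + 4*k
      + 2*(p - m' - k)*(k^2 + p*m') > 0 := by
  rw [cassonWalker_lhs_eq]
  have hpk' : 2 < p - k := by linarith
  have hp : 0 < p := by linarith
  have hN_gt : p < k^2 + p*m' := by nlinarith
  have hN_ge : 2*m' + 6 ≤ k^2 + p*m' := by nlinarith
  have h₁ : 0 ≤ (k^2 + p*m') * (k^2 + p*m' - (2*m' + 6)) :=
    mul_nonneg (by linarith) (sub_nonneg.2 hN_ge)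
  have h₂ : 0 < 2*(p - k)*(k^2 + p*m') - 4*p := by nlinarith
  have h₃ : 0 < 5 + 2*k*(k + m')*(p - k) + 4*m' + 4*k := by
    have : 0 ≤ 2*k*(k + m')*(p - k) := by positivity
    linarith
  linarith

/-- The Casson–Walker obstruction inequality (4.1) in the case `k ≥ 2`:
for `p ≥ 3`, `m' > 0`, `k ≥ 2`, `p > 2k`, the left-hand side is strictly positive. -/
theorem cassonWalker_neg_framing_k_ge_two (p m' k : ℤ)
    (hp : 3 ≤ p) (hm' : 0 < m') (hk : 2 ≤ k) (hpk : 2*k < p) :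
    (k^2 + p*m')^2 - 6*k^2 - 6*p*m' + 5 + 2*k*(k + m')*(p - k) + 4*m' - 4*p + 4*k
      + 2*(p - m' - k)*(k^2 + p*m') > 0 :=
  cassonWalker_neg_framing_k_ge_two_general p m' k hm' hk hpk
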